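/- (Correctable erasures on a subsystem code without gauge fixing — sufficiency.) Let F₂ = ZMod 2, let V = (Fin n → F₂) × (Fin n → F₂) with the symplectic form ω((a,b),(a',b')) = a·b' + a'·b, let G ≤ V be the gauge subspace and S = G ⊓ G^⊥ the stabilizer subspace, and let E ⊆ Fin n. If 2·|E| = finrank(π_E(S)) + finrank(G) − finrank(π_Ē(G)), then V_E ⊓ S^⊥ ≤ G; that is, every Pauli error supported in E with zero syndrome is a gauge operator, so the erasure pattern E supports no nontrivial logical operator and is correctable. -/

import Mathlib

open Module

/-- The `F₂`-vector space `(Fin n → F₂) × (Fin n → F₂)` representing the `n`-qubit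
Pauli group modulo phases: `(a, b)` represents `X^a Z^b`. -/
abbrev PauliSp (n : ℕ) := (Fin n → ZMod 2) × (Fin n → ZMod 2)

/-- The symplectic bilinear form `ω((a,b),(a',b')) = a·b' + a'·b` on `PauliSp n`. -/
def omegaBilin (n : ℕ) : PauliSp n →ₗ[ZMod 2] PauliSp n →ₗ[ZMod 2] ZMod 2 :=
  LinearMap.mk₂ (ZMod 2)
    (fun v w => (∑ i, v.1 i * w.2 i) + (∑ i, w.1 i * v.2 i))
    (by
      intro v v' w
      simp [add_mul, mul_add, Finset.sum_add_distrib]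
      ring)
    (by
      intro c v w
      simp [smul_eq_mul, mul_assoc, mul_left_comm, Finset.mul_sum, mul_add])
    (by
      intro v w w'
      simp [add_mul, mul_add, Finset.sum_add_distrib]
      ring)
    (by
      intro c v w
      simp [smul_eq_mul, mul_assoc, mul_left_comm, Finset.mul_sum, mul_add])

/-- The symplectic complement `W^⊥ = {v | ω(v, w) = 0 for all w ∈ W}` of a subspace `W`,
corresponding to the centralizer in the Pauli group. -/
def sperp {n : ℕ} (W : Submodule (ZMod 2) (PauliSp n)) : Submodule (ZMod 2) (PauliSp n) where
  carrier := {v | ∀ w ∈ W, omegaBilin n v w = 0}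
  zero_mem' := by intro w hw; simp
  add_mem' := by
    intro a b ha hb w hw
    rw [map_add, LinearMap.add_apply, ha w hw, hb w hw, add_zero]
  smul_mem' := by
    intro c a ha w hw
    rw [map_smul, LinearMap.smul_apply, ha w hw, smul_zero]

/-- `V_E`: the subspace of Pauli errors supported in the erasure pattern `E`. -/
def suppIn (n : ℕ) (E : Finset (Fin n)) : Submodule (ZMod 2) (PauliSp n) where
  carrier := {v | ∀ i, i ∉ E → v.1 i = 0 ∧ v.2 i = 0}
  zero_mem' := by intro i _; simp
  add_mem' := by
    intro a b ha hb i hi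
    have h1 := ha i hi; have h2 := hb i hi
    constructor
    · simp [h1.1, h2.1]
    · simp [h1.2, h2.2]
  smul_mem' := by
    intro c a ha i hi
    have h := ha i hi
    constructor
    · simp [h.1]
    · simp [h.2]

/-- `π_E`: the coordinate projection onto the qubits in `E`. -/
def projE (n : ℕ) (E : Finset (Fin n)) :
    PauliSp n →ₗ[ZMod 2] ((E → ZMod 2) × (E → ZMod 2)) :=
  LinearMap.prodMap
    (LinearMap.funLeft (ZMod 2) (ZMod 2) (fun i : E => (i : Fin n)))
    (LinearMap.funLeft (ZMod 2) (ZMod 2) (fun i : E => (i : Fin n)))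

section Aux

variable {n : ℕ}

lemma omegaBilin_apply (v w : PauliSp n) :
    omegaBilin n v w = (∑ i, v.1 i * w.2 i) + (∑ i, w.1 i * v.2 i) := rfl

lemma omega_single_right (v : PauliSp n) (i : Fin n) :
    omegaBilin n v (0, Pi.single i 1) = v.1 i := by
  simp [omegaBilin_apply, Pi.single_apply, mul_ite, Finset.sum_ite_eq']

lemma omega_single_left (v : PauliSp n) (i : Fin n) :
    omegaBilin n v (Pi.single i 1, 0) = v.2 i := by
  simp [omegaBilin_apply, Pi.single_apply, ite_mul, Finset.sum_ite_eq']

lemma omega_symm (v w : PauliSp n) : omegaBilin n v w = omegaBilin n w v := by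
  simp [omegaBilin_apply, add_comm]

lemma omega_isRefl : (omegaBilin n).IsRefl := by
  intro v w h; rw [omega_symm]; exact h

lemma omega_nondeg : LinearMap.BilinForm.Nondegenerate (omegaBilin n) := by
  have hl : LinearMap.SeparatingLeft (omegaBilin n) := by
    intro v hv
    ext i
    · simpa using (omega_single_right v i ▸ hv (0, Pi.single i 1))
    · simpa using (omega_single_left v i ▸ hv (Pi.single i 1, 0))
  exact ⟨hl, fun y hy => hl y (fun x => by rw [omega_symm]; exact hy x)⟩

lemma sperp_eq_orthogonal (W : Submodule (ZMod 2) (PauliSp n)) :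
    sperp W = LinearMap.BilinForm.orthogonal (omegaBilin n) W := by
  ext v
  constructor
  · intro h w hw
    show omegaBilin n w v = 0
    rw [omega_symm]; exact h w hw
  · intro h w hw
    rw [omega_symm]; exact h w hw

lemma sperp_sup (W W' : Submodule (ZMod 2) (PauliSp n)) :
    sperp (W ⊔ W') = sperp W ⊓ sperp W' := by
  ext v
  constructor
  · intro h
    exact ⟨fun w hw => h w (Submodule.mem_sup_left hw),
           fun w hw => h w (Submodule.mem_sup_right hw)⟩
  · rintro ⟨h1, h2⟩ w hw
    rcases Submodule.mem_sup.mp hw with ⟨y, hy, z, hz, rfl⟩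
    rw [map_add, h1 y hy, h2 z hz, add_zero]

lemma ker_projE (F : Finset (Fin n)) :
    LinearMap.ker (projE n F) = suppIn n Fᶜ := by
  ext v
  simp only [LinearMap.mem_ker]
  constructor
  · intro h i hi
    rw [Finset.mem_compl, not_not] at hi
    constructor
    · exact congr_fun (congr_arg Prod.fst h) ⟨i, hi⟩
    · exact congr_fun (congr_arg Prod.snd h) ⟨i, hi⟩
  · intro h
    refine Prod.ext (funext fun i => ?_) (funext fun i => ?_)
    · exact (h i (by simp)).1
    · exact (h i (by simp)).2

lemma finrank_suppIn (F : Finset (Fin n)) :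
    finrank (ZMod 2) ↥(suppIn n F) = 2 * F.card := by
  have hbij : Function.Bijective ((projE n F).comp (suppIn n F).subtype) := by
    constructor
    · intro ⟨v, hv⟩ ⟨w, hw⟩ h
      simp only [LinearMap.comp_apply, Submodule.coe_subtype] at h
      ext i
      · by_cases hi : i ∈ F
        · exact congr_fun (congr_arg Prod.fst h) ⟨i, hi⟩
        · rw [(hv i hi).1, (hw i hi).1]
      · by_cases hi : i ∈ F
        · exact congr_fun (congr_arg Prod.snd h) ⟨i, hi⟩
        · rw [(hv i hi).2, (hw i hi).2]
    · rintro ⟨a, b⟩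
      refine ⟨⟨((fun i => if h : i ∈ F then a ⟨i, h⟩ else 0),
        (fun i => if h : i ∈ F then b ⟨i, h⟩ else 0)), fun i hi => ⟨dif_neg hi, dif_neg hi⟩⟩, ?_⟩
      refine Prod.ext (funext fun i => ?_) (funext fun i => ?_) <;>
        simp [projE, LinearMap.funLeft]
  have := (LinearEquiv.ofBijective _ hbij).finrank_eq
  rw [this]
  simp only [Module.finrank_prod, Module.finrank_fintype_fun_eq_card, Fintype.card_coe]
  ring

lemma sperp_suppIn (F : Finset (Fin n)) :
    sperp (suppIn n F) = suppIn n Fᶜ := by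
  ext v
  constructor
  · intro h i hi
    rw [Finset.mem_compl, not_not] at hi
    constructor
    · have hw : ((0, Pi.single i 1) : PauliSp n) ∈ suppIn n F := by
        intro j hj
        exact ⟨rfl, Pi.single_eq_of_ne (fun hji => hj (by rw [hji]; exact hi)) 1⟩
      rw [← omega_single_right v i]; exact h _ hw
    · have hw : ((Pi.single i 1, 0) : PauliSp n) ∈ suppIn n F := by
        intro j hj
        exact ⟨Pi.single_eq_of_ne (fun hji => hj (by rw [hji]; exact hi)) 1, rfl⟩
      rw [← omega_single_left v i]; exact h _ hw
  · intro h w hw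
    rw [omegaBilin_apply]
    rw [Finset.sum_eq_zero, Finset.sum_eq_zero, add_zero]
    · intro i _
      by_cases hi : i ∈ F
      · rw [(h i (by simp [hi])).2, mul_zero]
      · rw [(hw i hi).1, zero_mul]
    · intro i _
      by_cases hi : i ∈ F
      · rw [(h i (by simp [hi])).1, zero_mul]
      · rw [(hw i hi).2, mul_zero]

lemma finrank_map_add_finrank_inf_ker {M₂ : Type*} [AddCommGroup M₂] [Module (ZMod 2) M₂]
    (f : PauliSp n →ₗ[ZMod 2] M₂) (p : Submodule (ZMod 2) (PauliSp n)) :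
    finrank (ZMod 2) ↥(p.map f) + finrank (ZMod 2) ↥(p ⊓ LinearMap.ker f) =
      finrank (ZMod 2) ↥p := by
  have h := LinearMap.finrank_range_add_finrank_ker (f.domRestrict p)
  rw [LinearMap.range_domRestrict, LinearMap.ker_domRestrict] at h
  rw [← h]
  congr 1
  rw [← Submodule.map_comap_subtype, Submodule.finrank_map_subtype_eq]

lemma finrank_pauliSp : finrank (ZMod 2) (PauliSp n) = 2 * n := by
  simp only [Module.finrank_prod, Module.finrank_fintype_fun_eq_card, Fintype.card_fin]
  ring

lemma finrank_add_finrank_sperp (W : Submodule (ZMod 2) (PauliSp n)) :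
    finrank (ZMod 2) ↥W + finrank (ZMod 2) ↥(sperp W) = 2 * n := by
  rw [sperp_eq_orthogonal]
  have h := LinearMap.BilinForm.finrank_add_finrank_orthogonal (B := omegaBilin n)
    omega_isRefl W
  rw [LinearMap.BilinForm.orthogonal_top_eq_bot (omega_nondeg (n := n)), inf_bot_eq,
    finrank_bot, add_zero, finrank_pauliSp] at h
  exact h

end Aux

/-- Correctable erasures on a subsystem code without gauge fixing (sufficiency):
if `2·|E| = finrank (π_E S) + finrank G − finrank (π_Ē G)`, where `S = G ⊓ G^⊥`, then
every Pauli error supported in `E` with zero syndrome is a gauge operator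
(`V_E ⊓ S^⊥ ≤ G`), so the erasure pattern `E` is correctable. -/
theorem correctable_erasure_subsystem_sufficient (n : ℕ) (E : Finset (Fin n))
    (G : Submodule (ZMod 2) (PauliSp n))
    (hdim : 2 * E.card =
      finrank (ZMod 2) ↥((G ⊓ sperp G).map (projE n E)) + finrank (ZMod 2) ↥G -
        finrank (ZMod 2) ↥(G.map (projE n Eᶜ))) :
    suppIn n E ⊓ sperp (G ⊓ sperp G) ≤ G := by
  set S := G ⊓ sperp G with hS
  -- Step A: suppIn n E ⊓ sperp S = sperp (S ⊔ suppIn n Eᶜ)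
  have hA : suppIn n E ⊓ sperp S = sperp (S ⊔ suppIn n Eᶜ) := by
    rw [sperp_sup, sperp_suppIn, compl_compl, inf_comm]
  -- G ≤ sperp S
  have hGperp : G ≤ sperp S := by
    intro g hg s hs
    rw [omega_symm]
    exact hs.2 g hg
  -- Step C: G ⊓ suppIn n E ≤ suppIn n E ⊓ sperp S
  have hC : G ⊓ suppIn n E ≤ suppIn n E ⊓ sperp S := by
    intro v ⟨h1, h2⟩
    exact ⟨h2, hGperp h1⟩
  -- dimension bookkeeping
  have e1 : finrank (ZMod 2) ↥(S ⊔ suppIn n Eᶜ) +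
      finrank (ZMod 2) ↥(sperp (S ⊔ suppIn n Eᶜ)) = 2 * n :=
    finrank_add_finrank_sperp _
  have e2 : finrank (ZMod 2) ↥(S ⊔ suppIn n Eᶜ) + finrank (ZMod 2) ↥(S ⊓ suppIn n Eᶜ) =
      finrank (ZMod 2) ↥S + finrank (ZMod 2) ↥(suppIn n Eᶜ) :=
    Submodule.finrank_sup_add_finrank_inf_eq S (suppIn n Eᶜ)
  have e3 : finrank (ZMod 2) ↥(S.map (projE n E)) + finrank (ZMod 2) ↥(S ⊓ suppIn n Eᶜ) =
      finrank (ZMod 2) ↥S := by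
    have := finrank_map_add_finrank_inf_ker (projE n E) S
    rwa [ker_projE] at this
  have e4 : finrank (ZMod 2) ↥(suppIn n Eᶜ) = 2 * Eᶜ.card := finrank_suppIn _
  have e5 : E.card + Eᶜ.card = n := by
    rw [Finset.card_add_card_compl, Fintype.card_fin]
  have e6 : finrank (ZMod 2) ↥(G.map (projE n Eᶜ)) + finrank (ZMod 2) ↥(G ⊓ suppIn n E) =
      finrank (ZMod 2) ↥G := by
    have := finrank_map_add_finrank_inf_ker (projE n Eᶜ) G
    rwa [ker_projE, compl_compl] at this
  have hle : finrank (ZMod 2) ↥(suppIn n E ⊓ sperp S) ≤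
      finrank (ZMod 2) ↥(G ⊓ suppIn n E) := by
    rw [hA]
    omega
  have heq : G ⊓ suppIn n E = suppIn n E ⊓ sperp S :=
    Submodule.eq_of_le_of_finrank_le hC hle
  rw [← heq]
  exact inf_le_left
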